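/- arXiv:2505.22741 — 2 statements merged into one kernel-verified Lean document; each statement's English description precedes it below -/
import Mathlib

section
/- Let F be a finite set of hypotheses h : X → {0,1} containing the target c*, and let data be drawn i.i.d. from an instance-dependent noisy oracle with per-instance flip rates η(x) and maximum flip rate η_max < 1/2; set γ = 1 − 2η_max. If the sample size satisfies N ≥ 2·log(|F|/δ)/(ε²γ²), then with probability at least 1 − δ, every hypothesis h ∈ F whose noisy generalization error exceeds η + γε has empirical risk strictly greater than η + γε/2, while c* has empirical risk at most η + γε/2, where η is the average noise rate. -/
/-!
A hypothesis `h` with `L h > η̄ + γε` agrees with the noisy label on a set of mass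
`1 - L h < 1 - η̄ - γε`, so empirical risk at most `η̄ + γε/2` means that the empirical frequency of
agreement exceeds its mean by `γε/2`; dually, `c*` disagrees with the label on a set of mass `η̄`.
By Hoeffding each such deviation has probability at most `exp (-2N(γε/2)²) ≤ δ/|F|`, and since
`L c* = η̄` the target is never among the bad hypotheses, so a union bound over `F` costs at most `δ`.
-/

open MeasureTheory ProbabilityTheory Finset Real

lemma mul_exp_neg_le_of_log_div_le {K δ c N : ℝ} (hK : 0 < K) (hδ : 0 < δ) (hc : 0 < c)
    (hN : 2 * log (K / δ) / c ≤ N) : K * exp (-(c * N) / 2) ≤ δ := by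
  rw [div_le_iff₀ hc] at hN
  calc K * exp (-(c * N) / 2) ≤ K * exp (-log (K / δ)) := by gcongr; linarith
    _ = δ := by rw [exp_neg, exp_log (by positivity)]; field_simp

lemma one_sub_card_mul_le_measureReal {Ω ι : Type*} [MeasurableSpace Ω] (μ : Measure Ω)
    [IsProbabilityMeasure μ] {F : Finset ι} {c : ι} (hc : c ∈ F) {P : ι → Prop} (hPc : ¬ P c)
    {A : ι → Ω → Prop} {B : Ω → Prop} {β : ℝ}
    (hA : ∀ h ∈ F, P h → μ.real {ω | ¬ A h ω} ≤ β) (hB : μ.real {ω | ¬ B ω} ≤ β) :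
    1 - #F * β ≤ μ.real {ω | (∀ h ∈ F, P h → A h ω) ∧ B ω} := by
  classical
  set G := {ω | (∀ h ∈ F, P h → A h ω) ∧ B ω}
  have hβ : 0 ≤ β := measureReal_nonneg.trans hB
  have hGc : Gᶜ ⊆ (⋃ h ∈ F.filter P, {ω | ¬ A h ω}) ∪ {ω | ¬ B ω} := by
    intro ω hω
    simp only [G, Set.mem_compl_iff, Set.mem_ofPred_eq, not_and_or, not_forall] at hω
    simp only [Set.mem_union, Set.mem_iUnion, mem_filter, Set.mem_ofPred_eq, exists_prop]
    grind
  have hcard : #(F.filter P) + 1 ≤ #F := by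
    rw [← card_erase_add_one hc]
    gcongr
    intro h hh
    rw [mem_filter] at hh
    exact mem_erase.mpr ⟨fun hhc => hPc (hhc ▸ hh.2), hh.1⟩
  have hμGc : μ.real Gᶜ ≤ #F * β :=
    calc μ.real Gᶜ ≤ ∑ h ∈ F.filter P, μ.real {ω | ¬ A h ω} + μ.real {ω | ¬ B ω} :=
          (measureReal_mono hGc).trans
            ((measureReal_union_le _ _).trans (by gcongr; exact measureReal_biUnion_finset_le _ _))
      _ ≤ #(F.filter P) * β + β := by
          gcongr
          rw [← nsmul_eq_mul]
          exact sum_le_card_nsmul _ _ _ fun h hh => hA h (mem_filter.mp hh).1 (mem_filter.mp hh).2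
      _ ≤ #F * β := by
          rw [← add_one_mul]
          gcongr
          exact_mod_cast hcard
  have hunion : 1 ≤ μ.real G + μ.real Gᶜ := by
    simpa [Set.union_compl_self] using measureReal_union_le (μ := μ) G Gᶜ
  linarith

section Hoeffding

variable {Ω : Type*} [MeasurableSpace Ω] (D : Measure Ω) [IsProbabilityMeasure D]

lemma measureReal_pi_le_card_mem_of_measurableSet {S : Set Ω} (hS : MeasurableSet S)
    [DecidablePred (· ∈ S)] (N : ℕ) {a : ℝ} (ha : 0 ≤ a) :
    (Measure.pi fun _ : Fin N => D).real {s | N * (D.real S + a) ≤ #{i | s i ∈ S}} ≤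
      exp (-2 * N * a ^ 2) := by
  set μ := Measure.pi fun _ : Fin N => D
  set Y : Fin N → (Fin N → Ω) → ℝ := fun i s => S.indicator 1 (s i) - D.real S
  have hind : Measurable (S.indicator (1 : Ω → ℝ)) := measurable_one.indicator hS
  have hsubG : ∀ i, HasSubgaussianMGF (Y i) (1 / 4) μ := by
    intro i
    have hmean : μ[fun s => S.indicator (1 : Ω → ℝ) (s i)] = D.real S := by
      rw [integral_comp_eval hind.aestronglyMeasurable, integral_indicator_one hS]
    have h := hasSubgaussianMGF_of_mem_Icc (μ := μ) (a := 0) (b := 1)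
      (hind.comp (measurable_pi_apply i)).aemeasurable
      (ae_of_all _ fun s => by by_cases hs : s i ∈ S <;> simp [hs])
    convert h using 1
    · simp only [Function.comp_def, hmean, Y]
    · norm_num
  have hindep : iIndepFun Y μ := iIndepFun_pi fun _ => (hind.sub_const _).aemeasurable
  have hsum : ∀ s, ∑ i, Y i s = #{i | s i ∈ S} - N * D.real S := by
    intro s
    simp [Y, sum_sub_distrib, Set.indicator_apply, sum_boole]
  calc μ.real {s | N * (D.real S + a) ≤ #{i | s i ∈ S}}
      = μ.real {s | N * a ≤ ∑ i, Y i s} := by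
        congr with s
        simp only [hsum]
        constructor <;> intro <;> linarith
    _ ≤ exp (-(N * a) ^ 2 / (2 * ∑ _i : Fin N, (1 / 4 : NNReal))) :=
        HasSubgaussianMGF.measure_sum_ge_le_of_iIndepFun hindep (fun i _ => hsubG i)
          (by positivity)
    _ = exp (-2 * N * a ^ 2) := by
        congr 1
        simp only [sum_const, card_univ, Fintype.card_fin, nsmul_eq_mul]
        push_cast
        rcases N.eq_zero_or_pos with rfl | hN
        · simp
        · field_simp
          ring

/-- Agreement sets `{ω | h ω.1 = ω.2}` need not be measurable; Hoeffding's bound transfers to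
them through their measurable hulls. -/
lemma measureReal_pi_le_card_mem (S : Set Ω) [DecidablePred (· ∈ S)] (N : ℕ) {a : ℝ}
    (ha : 0 ≤ a) :
    (Measure.pi fun _ : Fin N => D).real {s | N * (D.real S + a) ≤ #{i | s i ∈ S}} ≤
      exp (-2 * N * a ^ 2) := by
  classical
  have hT : D.real (toMeasurable D S) = D.real S := by
    simp only [measureReal_def, measure_toMeasurable]
  refine (measureReal_mono fun s hs => ?_).trans
    (measureReal_pi_le_card_mem_of_measurableSet D (measurableSet_toMeasurable D S) N ha)
  have hcard : #{i | s i ∈ S} ≤ #{i | s i ∈ toMeasurable D S} :=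
    card_le_card fun i hi => by
      simp only [mem_filter, mem_univ, true_and] at hi ⊢
      exact subset_toMeasurable D S hi
  simp only [Set.mem_ofPred_eq, hT] at hs ⊢
  exact hs.trans (Nat.cast_le.mpr hcard)

lemma measureReal_pi_lt_card_mem_div_le {S : Set Ω} [DecidablePred (· ∈ S)] {N : ℕ} {a r : ℝ}
    (ha : 0 ≤ a) (hr : D.real S + a ≤ r) :
    (Measure.pi fun _ : Fin N => D).real {s | r < #{i | s i ∈ S} / N} ≤
      exp (-2 * N * a ^ 2) := by
  refine (measureReal_mono fun s hs => ?_).trans (measureReal_pi_le_card_mem D S N ha)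
  simp only [Set.mem_ofPred_eq] at hs ⊢
  rcases N.eq_zero_or_pos with rfl | hN
  · simp
  · rw [lt_div_iff₀ (by positivity)] at hs
    calc (N : ℝ) * (D.real S + a) ≤ N * r := by gcongr
      _ ≤ #{i | s i ∈ S} := by linarith

lemma measureReal_pi_card_not_mem_div_le_le {S : Set Ω} [DecidablePred (· ∈ S)] {N : ℕ}
    {a r : ℝ} (ha : 0 ≤ a) (hr : D.real S + a ≤ 1 - r) :
    (Measure.pi fun _ : Fin N => D).real {s | #{i | s i ∉ S} / N ≤ r} ≤
      exp (-2 * N * a ^ 2) := by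
  refine (measureReal_mono fun s hs => ?_).trans (measureReal_pi_le_card_mem D S N ha)
  simp only [Set.mem_ofPred_eq] at hs ⊢
  have hsplit : (#{i | s i ∈ S} : ℝ) + #{i | s i ∉ S} = N := by
    have h := card_filter_add_card_filter_not (s := univ) (p := fun i => s i ∈ S)
    rw [card_univ, Fintype.card_fin] at h
    exact_mod_cast h
  rcases N.eq_zero_or_pos with rfl | hN
  · simp
  · rw [div_le_iff₀ (by positivity)] at hs
    calc (N : ℝ) * (D.real S + a) ≤ N * (1 - r) := by gcongr
      _ ≤ #{i | s i ∈ S} := by linarith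

end Hoeffding

section NoisyOracle

variable {X : Type*} [Fintype X] [MeasurableSpace X] {pX η : X → ℝ} {cstar : X → Bool}
  {D : Measure (X × Bool)}

lemma measureReal_graph_le_sum (hpX0 : ∀ x, 0 ≤ pX x) (hη0 : ∀ x, 0 ≤ η x)
    (hη1 : ∀ x, η x ≤ 1)
    (hD : ∀ x z, D {(x, z)} = ENNReal.ofReal (pX x * if z = cstar x then 1 - η x else η x))
    (v : X → Bool) :
    D.real {ω | v ω.1 = ω.2} ≤ ∑ x, pX x * (if v x = cstar x then 1 - η x else η x) := by
  have hgraph : {ω : X × Bool | v ω.1 = ω.2} = ⋃ x ∈ (univ : Finset X), {(x, v x)} := by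
    ext ⟨x, z⟩
    simp [eq_comm]
  rw [hgraph]
  refine (measureReal_biUnion_finset_le _ _).trans_eq (sum_congr rfl fun x _ => ?_)
  have hflip : 0 ≤ if v x = cstar x then 1 - η x else η x := by
    split_ifs
    · linarith [hη1 x]
    · exact hη0 x
  rw [measureReal_def, hD, ENNReal.toReal_ofReal (mul_nonneg (hpX0 x) hflip)]

lemma measureReal_agree_le (hpX0 : ∀ x, 0 ≤ pX x) (hpX1 : ∑ x, pX x = 1)
    (hη0 : ∀ x, 0 ≤ η x) (hη1 : ∀ x, η x ≤ 1)
    (hD : ∀ x z, D {(x, z)} = ENNReal.ofReal (pX x * if z = cstar x then 1 - η x else η x))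
    (h : X → Bool) :
    D.real {ω | h ω.1 = ω.2} ≤
      1 - ∑ x, pX x * (if h x = cstar x then η x else 1 - η x) := by
  refine (measureReal_graph_le_sum hpX0 hη0 hη1 hD h).trans_eq ?_
  rw [eq_sub_iff_add_eq, ← sum_add_distrib]
  refine (sum_congr rfl fun x _ => ?_).trans hpX1
  split_ifs <;> ring

lemma measureReal_target_ne_le (hpX0 : ∀ x, 0 ≤ pX x) (hη0 : ∀ x, 0 ≤ η x)
    (hη1 : ∀ x, η x ≤ 1)
    (hD : ∀ x z, D {(x, z)} = ENNReal.ofReal (pX x * if z = cstar x then 1 - η x else η x)) :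
    D.real {ω | cstar ω.1 ≠ ω.2} ≤ ∑ x, pX x * η x := by
  simpa only [Bool.not_eq_iff, ne_eq, not_true_eq_false, if_false] using
    measureReal_graph_le_sum hpX0 hη0 hη1 hD (fun x => !cstar x)

end NoisyOracle

/-- Sample-complexity bound for ERM over a finite hypothesis class under
instance-dependent classification noise with maximum flip rate η_max < 1/2: if
N ≥ 2 log(|F|/δ)/(ε²γ²) with γ = 1 - 2η_max, then with probability ≥ 1 - δ over the
i.i.d. noisy sample, every hypothesis with noisy generalization error exceeding
η̄ + γε has empirical risk > η̄ + γε/2, while the target c* has empirical risk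
≤ η̄ + γε/2. -/
theorem stmt6 {X : Type*} [Fintype X] [MeasurableSpace X]
    (pX : X → ℝ) (hpX0 : ∀ x, 0 ≤ pX x) (hpX1 : ∑ x, pX x = 1)
    (η : X → ℝ) (ηmax : ℝ) (hη0 : ∀ x, 0 ≤ η x) (hηle : ∀ x, η x ≤ ηmax)
    (hηmax : ηmax < 1 / 2)
    (cstar : X → Bool) (F : Finset (X → Bool)) (hc : cstar ∈ F)
    (ε δ γ ηbar : ℝ) (hε : 0 < ε) (hδ : 0 < δ)
    (hγ : γ = 1 - 2 * ηmax)
    (hηbar : ηbar = ∑ x, pX x * η x)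
    (N : ℕ) (hN : 2 * Real.log (F.card / δ) / (ε ^ 2 * γ ^ 2) ≤ N)
    (D : Measure (X × Bool)) [IsProbabilityMeasure D]
    (hD : ∀ x z, D {(x, z)} =
      ENNReal.ofReal (pX x * if z = cstar x then 1 - η x else η x))
    (L : (X → Bool) → ℝ)
    (hL : ∀ h : X → Bool, L h = ∑ x, pX x * (if h x = cstar x then η x else 1 - η x)) :
    ENNReal.ofReal (1 - δ) ≤
      (Measure.pi fun _ : Fin N => D)
        {s | (∀ h ∈ F, ηbar + γ * ε < L h →
                ηbar + γ * ε / 2 <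
                  ((Finset.univ.filter fun i => h (s i).1 ≠ (s i).2).card : ℝ) / N) ∧
             ((Finset.univ.filter fun i => cstar (s i).1 ≠ (s i).2).card : ℝ) / N ≤
               ηbar + γ * ε / 2} := by
  have hη1 : ∀ x, η x ≤ 1 := fun x => by linarith [hηle x]
  have hγ0 : 0 < γ := by rw [hγ]; linarith
  have ha : 0 ≤ γ * ε / 2 := by positivity
  have hLc : L cstar = ηbar := by simp [hL, hηbar]
  have hβ : (#F : ℝ) * exp (-2 * N * (γ * ε / 2) ^ 2) ≤ δ := by
    convert mul_exp_neg_le_of_log_div_le (Nat.cast_pos.mpr (card_pos.mpr ⟨_, hc⟩)) hδ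
      (by positivity) hN using 3
    ring
  refine ENNReal.ofReal_le_of_le_toReal ((sub_le_sub_left hβ 1).trans ?_)
  refine one_sub_card_mul_le_measureReal _ hc (P := fun h => ηbar + γ * ε < L h)
    (by rw [hLc, not_lt]; linarith [mul_pos hγ0 hε]) (fun h _ hbad => ?_) ?_
  · refine (measureReal_mono fun s hs => not_lt.mp hs).trans
      (measureReal_pi_card_not_mem_div_le_le (S := {ω | h ω.1 = ω.2}) D ha ?_)
    linarith [measureReal_agree_le hpX0 hpX1 hη0 hη1 hD h, hL h]
  · refine (measureReal_mono fun s hs => not_le.mp hs).trans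
      (measureReal_pi_lt_card_mem_div_le (S := {ω | cstar ω.1 ≠ ω.2}) D ha ?_)
    linarith [measureReal_target_ne_le hpX0 hη0 hη1 hD]
end

section
/- Let 0 < y ≤ x < 1/2 and suppose an error model on n = 2m bits assigns flip probability x to the first m bits and y to the last m bits. If x⁴/(1−x)⁴ < y²/(1−y)² with m = 4 (n = 8), then every weight-3 error pattern has probability strictly greater than every weight-5 error pattern. -/
set_option maxHeartbeats 1000000


open Finset

/-- For 8 bits where bits 1-4 flip with probability x and bits 5-8 with
probability y (0 < y ≤ x < 1/2), if x⁴/(1-x)⁴ < y²/(1-y)² then every weight-3 error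
pattern is strictly more likely than every weight-5 error pattern. -/
theorem stmt11 (x y : ℝ) (hy0 : 0 < y) (hyx : y ≤ x) (hx : x < 1 / 2)
    (r : Fin 8 → ℝ) (hr : ∀ i, r i = if (i : ℕ) < 4 then x else y)
    (P : (Fin 8 → Bool) → ℝ)
    (hP : ∀ e, P e = ∏ i, if e i then r i else 1 - r i)
    (hwell : x ^ 4 / (1 - x) ^ 4 < y ^ 2 / (1 - y) ^ 2) :
    ∀ e3 e5 : Fin 8 → Bool,
      (Finset.univ.filter fun i => e3 i).card = 3 →
      (Finset.univ.filter fun i => e5 i).card = 5 →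
      P e5 < P e3 := by
  intro e3 e5 h3 h5
  have hx0 : 0 < x := lt_of_lt_of_le hy0 hyx
  have hy1 : y < 1 := by linarith
  have h1x : (0:ℝ) < 1 - x := by linarith
  have h1y : (0:ℝ) < 1 - y := by linarith
  have hkey : x ^ 4 * (1 - y) ^ 2 < y ^ 2 * (1 - x) ^ 4 := by
    rw [div_lt_div_iff₀ (by positivity) (by positivity)] at hwell
    linarith [hwell]
  have hcross : y * (1 - x) ≤ x * (1 - y) := by nlinarith
  have hcross2 : (y * (1 - x)) ^ 2 ≤ (x * (1 - y)) ^ 2 :=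
    pow_le_pow_left₀ (by positivity) hcross 2
  have hcross3 : (y * (1 - x)) ^ 3 ≤ (x * (1 - y)) ^ 3 :=
    pow_le_pow_left₀ (by positivity) hcross 3
  -- decomposition of P
  have hform : ∀ e : Fin 8 → Bool,
      P e = x ^ ((univ.filter fun i : Fin 8 => (i:ℕ) < 4 ∧ e i).card)
          * (1-x) ^ ((univ.filter fun i : Fin 8 => (i:ℕ) < 4 ∧ ¬ e i).card)
          * (y ^ ((univ.filter fun i : Fin 8 => ¬ (i:ℕ) < 4 ∧ e i).card)
          * (1-y) ^ ((univ.filter fun i : Fin 8 => ¬ (i:ℕ) < 4 ∧ ¬ e i).card)) := by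
    intro e
    rw [hP]
    rw [← Finset.prod_filter_mul_prod_filter_not univ (fun i : Fin 8 => (i:ℕ) < 4)]
    have h1 : ∏ i ∈ univ.filter (fun i : Fin 8 => (i:ℕ) < 4),
        (if e i then r i else 1 - r i)
        = ∏ i ∈ univ.filter (fun i : Fin 8 => (i:ℕ) < 4),
        (if e i then x else 1 - x) := by
      refine Finset.prod_congr rfl fun i hi => ?_
      simp only [Finset.mem_filter] at hi
      rw [hr i, if_pos hi.2]
    have h2 : ∏ i ∈ univ.filter (fun i : Fin 8 => ¬ (i:ℕ) < 4),
        (if e i then r i else 1 - r i)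
        = ∏ i ∈ univ.filter (fun i : Fin 8 => ¬ (i:ℕ) < 4),
        (if e i then y else 1 - y) := by
      refine Finset.prod_congr rfl fun i hi => ?_
      simp only [Finset.mem_filter] at hi
      rw [hr i, if_neg hi.2]
    rw [h1, h2, Finset.prod_ite, Finset.prod_ite, Finset.prod_const, Finset.prod_const,
      Finset.prod_const, Finset.prod_const, Finset.filter_filter, Finset.filter_filter,
      Finset.filter_filter, Finset.filter_filter]
  -- cardinal bookkeeping
  have hcard4 : (univ.filter fun i : Fin 8 => (i:ℕ) < 4).card = 4 := by
    set_option maxRecDepth 10000 in decide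
  have hcard4' : (univ.filter fun i : Fin 8 => ¬ (i:ℕ) < 4).card = 4 := by
    set_option maxRecDepth 10000 in decide
  have hsplitA : ∀ e : Fin 8 → Bool,
      (univ.filter fun i : Fin 8 => (i:ℕ) < 4 ∧ e i).card
      + (univ.filter fun i : Fin 8 => (i:ℕ) < 4 ∧ ¬ e i).card = 4 := by
    intro e
    have h := Finset.card_filter_add_card_filter_not
      (s := univ.filter fun i : Fin 8 => (i:ℕ) < 4) (p := fun i => e i)
    rw [Finset.filter_filter, Finset.filter_filter, hcard4] at h
    exact h
  have hsplitB : ∀ e : Fin 8 → Bool,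
      (univ.filter fun i : Fin 8 => ¬ (i:ℕ) < 4 ∧ e i).card
      + (univ.filter fun i : Fin 8 => ¬ (i:ℕ) < 4 ∧ ¬ e i).card = 4 := by
    intro e
    have h := Finset.card_filter_add_card_filter_not
      (s := univ.filter fun i : Fin 8 => ¬ (i:ℕ) < 4) (p := fun i => e i)
    rw [Finset.filter_filter, Finset.filter_filter, hcard4'] at h
    exact h
  have hsplitW : ∀ e : Fin 8 → Bool,
      (univ.filter fun i : Fin 8 => (i:ℕ) < 4 ∧ e i).card
      + (univ.filter fun i : Fin 8 => ¬ (i:ℕ) < 4 ∧ e i).card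
      = (univ.filter fun i => e i).card := by
    intro e
    have hcomm1 : univ.filter (fun i : Fin 8 => e i ∧ (i:ℕ) < 4)
        = univ.filter (fun i : Fin 8 => (i:ℕ) < 4 ∧ e i) := by
      ext i; simp [and_comm]
    have hcomm2 : univ.filter (fun i : Fin 8 => e i ∧ ¬ (i:ℕ) < 4)
        = univ.filter (fun i : Fin 8 => ¬ (i:ℕ) < 4 ∧ e i) := by
      ext i; simp [and_comm]
    have h := Finset.card_filter_add_card_filter_not
      (s := univ.filter fun i : Fin 8 => e i) (p := fun i : Fin 8 => (i:ℕ) < 4)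
    rw [Finset.filter_filter, Finset.filter_filter, hcomm1, hcomm2] at h
    exact h
  -- abbreviations
  rw [hform e3, hform e5]
  set a1 := (univ.filter fun i : Fin 8 => (i:ℕ) < 4 ∧ e3 i).card with ha1
  set a2 := (univ.filter fun i : Fin 8 => (i:ℕ) < 4 ∧ ¬ e3 i).card with ha2
  set b1 := (univ.filter fun i : Fin 8 => ¬ (i:ℕ) < 4 ∧ e3 i).card with hb1
  set b2 := (univ.filter fun i : Fin 8 => ¬ (i:ℕ) < 4 ∧ ¬ e3 i).card with hb2
  set c1 := (univ.filter fun i : Fin 8 => (i:ℕ) < 4 ∧ e5 i).card with hc1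
  set c2 := (univ.filter fun i : Fin 8 => (i:ℕ) < 4 ∧ ¬ e5 i).card with hc2
  set d1 := (univ.filter fun i : Fin 8 => ¬ (i:ℕ) < 4 ∧ e5 i).card with hd1
  set d2 := (univ.filter fun i : Fin 8 => ¬ (i:ℕ) < 4 ∧ ¬ e5 i).card with hd2
  have hA3 : a1 + a2 = 4 := hsplitA e3
  have hB3 : b1 + b2 = 4 := hsplitB e3
  have hW3 : a1 + b1 = 3 := by rw [hsplitW e3]; exact h3
  have hA5 : c1 + c2 = 4 := hsplitA e5
  have hB5 : d1 + d2 = 4 := hsplitB e5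
  have hW5 : c1 + d1 = 5 := by rw [hsplitW e5]; exact h5
  clear_value a1 a2 b1 b2 c1 c2 d1 d2
  -- chain: weight5 term ≤ x^4 y (1-y)^3 < y^3 (1-x)^4 (1-y) ≤ weight3 term
  have hmid : x ^ 4 * (y * (1 - y) ^ 3) < y ^ 3 * (1 - x) ^ 4 * (1 - y) := by
    nlinarith [mul_lt_mul_of_pos_left hkey (mul_pos hy0 h1y)]
  have hupper : x ^ c1 * (1-x) ^ c2 * (y ^ d1 * (1-y) ^ d2)
      ≤ x ^ 4 * (y * (1 - y) ^ 3) := by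
    have hc1le : c1 ≤ 4 := by omega
    have hc1ge : 1 ≤ c1 := by omega
    have hd1e : d1 = 5 - c1 := by omega
    have hc2e : c2 = 4 - c1 := by omega
    have hd2e : d2 = c1 - 1 := by omega
    subst hd1e hc2e hd2e
    interval_cases c1
    · norm_num
      nlinarith [mul_le_mul_of_nonneg_left hcross3 (mul_pos hx0 hy0).le]
    · norm_num
      nlinarith [mul_le_mul_of_nonneg_left hcross2
        (by positivity : (0:ℝ) ≤ x*y*(x*(1-y)))]
    · norm_num
      nlinarith [mul_le_mul_of_nonneg_left hcross
        (by positivity : (0:ℝ) ≤ x*y*(x*(1-y))^2)]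
    · exact le_of_eq (by ring)
  have hlower : y ^ 3 * (1 - x) ^ 4 * (1 - y)
      ≤ x ^ a1 * (1-x) ^ a2 * (y ^ b1 * (1-y) ^ b2) := by
    have ha1le : a1 ≤ 3 := by omega
    have hb1e : b1 = 3 - a1 := by omega
    have ha2e : a2 = 4 - a1 := by omega
    have hb2e : b2 = 1 + a1 := by omega
    subst hb1e ha2e hb2e
    interval_cases a1
    · exact le_of_eq (by ring)
    · norm_num
      nlinarith [mul_le_mul_of_nonneg_left hcross
        (by positivity : (0:ℝ) ≤ (1-x)*(1-y)*(y*(1-x))^2)]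
    · norm_num
      nlinarith [mul_le_mul_of_nonneg_left hcross2
        (by positivity : (0:ℝ) ≤ (1-x)*(1-y)*(y*(1-x)))]
    · norm_num
      nlinarith [mul_le_mul_of_nonneg_left hcross3
        (by positivity : (0:ℝ) ≤ (1-x)*(1-y))]
  calc x ^ c1 * (1-x) ^ c2 * (y ^ d1 * (1-y) ^ d2)
      ≤ x ^ 4 * (y * (1 - y) ^ 3) := hupper
    _ < y ^ 3 * (1 - x) ^ 4 * (1 - y) := hmid
    _ ≤ x ^ a1 * (1-x) ^ a2 * (y ^ b1 * (1-y) ^ b2) := hlower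
end
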